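/- arXiv:2310.11907 — 6 statements merged into one kernel-verified Lean document; each statement's English description precedes it below -/
import Mathlib

section
/- Let Γ be a signed graph of order m+1 with ordered Laplacian spectrum (α_1, α_2, …, α_{m+1}), and let Γ' be the signed graph of order m obtained from Γ by deleting any one vertex v together with all its incident edges, with ordered Laplacian spectrum (β_1, β_2, …, β_m). Then α_p ≤ β_p + 1 ≤ α_{p+1} + 1 for every p = 1, 2, …, m. -/
open Polynomial

/-- A signed adjacency matrix: symmetric, zero diagonal, entries in {-1,0,1}. -/
def IsSignedAdj {n : ℕ} (A : Matrix (Fin n) (Fin n) ℝ) : Prop :=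
  A.IsSymm ∧ (∀ i, A i i = 0) ∧ ∀ i j, A i j = -1 ∨ A i j = 0 ∨ A i j = 1

/-- Degree of vertex `i`: number of neighbours. -/
noncomputable def deg {n : ℕ} (A : Matrix (Fin n) (Fin n) ℝ) (i : Fin n) : ℕ :=
  {j | A i j ≠ 0}.ncard

/-- Negative degree of vertex `i`. -/
noncomputable def negDeg {n : ℕ} (A : Matrix (Fin n) (Fin n) ℝ) (i : Fin n) : ℕ :=
  {j | A i j = -1}.ncard

/-- Positive degree of vertex `i`. -/
noncomputable def posDeg {n : ℕ} (A : Matrix (Fin n) (Fin n) ℝ) (i : Fin n) : ℕ :=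
  {j | A i j = 1}.ncard

/-- Laplacian matrix `L = D - A`. -/
noncomputable def lap {n : ℕ} (A : Matrix (Fin n) (Fin n) ℝ) : Matrix (Fin n) (Fin n) ℝ :=
  Matrix.diagonal (fun i => (deg A i : ℝ)) - A

/-- Net-Laplacian matrix `N = D± - A`, where `D±` is the diagonal of signed degrees. -/
noncomputable def netLap {n : ℕ} (A : Matrix (Fin n) (Fin n) ℝ) : Matrix (Fin n) (Fin n) ℝ :=
  Matrix.diagonal (fun i => ∑ j, A i j) - A

/-- Normalized net-Laplacian `D^{-1/2} N D^{-1/2}`. -/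
noncomputable def normNetLap {n : ℕ} (A : Matrix (Fin n) (Fin n) ℝ) :
    Matrix (Fin n) (Fin n) ℝ :=
  Matrix.diagonal (fun i => (Real.sqrt (deg A i))⁻¹) * netLap A *
    Matrix.diagonal (fun i => (Real.sqrt (deg A i))⁻¹)

/-- `μ` is the ordered (non-decreasing) spectrum of `M` : it is monotone and lists the
eigenvalues of `M` with multiplicity, i.e. the characteristic polynomial splits as
`∏ (X - μ i)`. -/
def IsOrderedSpectrum {n : ℕ} (M : Matrix (Fin n) (Fin n) ℝ) (μ : Fin n → ℝ) : Prop :=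
  Monotone μ ∧ M.charpoly = ∏ i, (X - C (μ i))

/-- Deleting the edge `uv`: set the `(u,v)` and `(v,u)` entries to `0`. -/
def deleteEdge {n : ℕ} (A : Matrix (Fin n) (Fin n) ℝ) (u v : Fin n) :
    Matrix (Fin n) (Fin n) ℝ :=
  Matrix.of fun i j => if (i = u ∧ j = v) ∨ (i = v ∧ j = u) then 0 else A i j

/-- Deleting the vertex `v`: principal submatrix omitting row/column `v`. -/
def deleteVertex {n : ℕ} (A : Matrix (Fin (n+1)) (Fin (n+1)) ℝ) (v : Fin (n+1)) :
    Matrix (Fin n) (Fin n) ℝ :=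
  A.submatrix v.succAbove v.succAbove

/-!
Write `L` for the Laplacian of `Γ` and `L'` for that of `Γ' = Γ - v`. The principal submatrix of
`L` obtained by deleting row and column `v` is `L' + D`, where `D` is the diagonal `0/1` matrix
marking the neighbours of `v`; hence `L' ≤ L[v̂] ≤ L' + I` as quadratic forms. A vector of
`ℝ^{m+1}` vanishing at `v` has the same quadratic form under `L` as its restriction has under
`L[v̂]`, so the Courant–Fischer dimension count, with the one extra linear condition `x v = 0`,
gives `α_p ≤ β_p + 1` and `β_p ≤ α_{p+1}`.
-/

open Matrix

theorem OrthonormalBasis.dotProduct_eq_sum {ι n : Type*} [Fintype ι] [Fintype n]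
    (b : OrthonormalBasis ι ℝ (EuclideanSpace ℝ n)) (x y : n → ℝ) :
    x ⬝ᵥ y = ∑ i, (⇑(b i) ⬝ᵥ x) * (⇑(b i) ⬝ᵥ y) := by
  have h := b.sum_inner_mul_inner (WithLp.toLp 2 x) (WithLp.toLp 2 y)
  simp only [EuclideanSpace.inner_eq_star_dotProduct, star_trivial] at h
  rw [dotProduct_comm x y, ← h]
  simp_rw [dotProduct_comm y]

theorem OrthonormalBasis.dotProduct_mulVec_eq_sum {n : ℕ} {M : Matrix (Fin n) (Fin n) ℝ}
    {μ : Fin n → ℝ} (hM : M.IsHermitian) (b : OrthonormalBasis (Fin n) ℝ (EuclideanSpace ℝ (Fin n)))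
    (hb : ∀ i, M *ᵥ ⇑(b i) = μ i • ⇑(b i)) (x : Fin n → ℝ) :
    x ⬝ᵥ (M *ᵥ x) = ∑ i, μ i * (⇑(b i) ⬝ᵥ x) ^ 2 := by
  rw [b.dotProduct_eq_sum]
  refine Finset.sum_congr rfl fun i _ => ?_
  rw [dotProduct_mulVec, ← mulVec_transpose, ← conjTranspose_eq_transpose_of_trivial, hM.eq, hb,
    smul_dotProduct, smul_eq_mul]
  ring

theorem Module.exists_ne_zero_forall_apply_eq_zero {ι V : Type*} [Fintype ι] [AddCommGroup V]
    [Module ℝ V] [FiniteDimensional ℝ V] (f : ι → Module.Dual ℝ V)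
    (h : Fintype.card ι < Module.finrank ℝ V) : ∃ x ≠ 0, ∀ i, f i x = 0 := by
  have hker := (LinearMap.pi f).ker_ne_bot_of_finrank_lt
    (by rwa [Module.finrank_fintype_fun_eq_card])
  obtain ⟨x, hx, hx0⟩ := (Submodule.ne_bot_iff _).mp hker
  exact ⟨x, hx0, fun i => congrFun hx i⟩

namespace IsOrderedSpectrum

variable {n : ℕ} {M : Matrix (Fin n) (Fin n) ℝ} {μ : Fin n → ℝ}

theorem eq_eigenvalues_comp_sort (hM : M.IsHermitian) (hμ : IsOrderedSpectrum M μ) :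
    μ = hM.eigenvalues ∘ Tuple.sort hM.eigenvalues := by
  have hroots : Finset.univ.val.map μ = Finset.univ.val.map hM.eigenvalues := by
    have h := hM.roots_charpoly_eq_eigenvalues
    rw [hμ.2, Polynomial.roots_prod _ _
      (Finset.prod_ne_zero_iff.mpr fun i _ => X_sub_C_ne_zero _)] at h
    simpa using h
  have hperm : (List.ofFn μ).Perm (List.ofFn (hM.eigenvalues ∘ Tuple.sort hM.eigenvalues)) := by
    refine (Multiset.coe_eq_coe.mp ?_).trans (Equiv.Perm.ofFn_comp_perm _ _).symm
    rwa [← Fin.univ_val_map, ← Fin.univ_val_map]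
  exact List.ofFn_injective (hperm.eq_of_sortedLE (List.sortedLE_ofFn_iff.mpr hμ.1)
    (List.sortedLE_ofFn_iff.mpr (Tuple.monotone_sort _)))

theorem exists_orthonormalBasis (hM : M.IsHermitian) (hμ : IsOrderedSpectrum M μ) :
    ∃ b : OrthonormalBasis (Fin n) ℝ (EuclideanSpace ℝ (Fin n)),
      ∀ i, M *ᵥ ⇑(b i) = μ i • ⇑(b i) := by
  refine ⟨hM.eigenvectorBasis.reindex (Tuple.sort hM.eigenvalues).symm, fun i => ?_⟩
  rw [OrthonormalBasis.reindex_apply, Equiv.symm_symm, hM.mulVec_eigenvectorBasis,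
    hμ.eq_eigenvalues_comp_sort hM, Function.comp_apply]

theorem exists_rayleigh_bounds (hM : M.IsHermitian) (hμ : IsOrderedSpectrum M μ) :
    ∃ c : Fin n → Module.Dual ℝ (Fin n → ℝ),
      (∀ k x, (∀ i < k, c i x = 0) → μ k * (x ⬝ᵥ x) ≤ x ⬝ᵥ (M *ᵥ x)) ∧
      (∀ k x, (∀ i, k < i → c i x = 0) → x ⬝ᵥ (M *ᵥ x) ≤ μ k * (x ⬝ᵥ x)) := by
  obtain ⟨b, hb⟩ := hμ.exists_orthonormalBasis hM
  have hnorm (x : Fin n → ℝ) : x ⬝ᵥ x = ∑ i, (⇑(b i) ⬝ᵥ x) ^ 2 := by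
    simp only [b.dotProduct_eq_sum x x, sq]
  refine ⟨fun i => dotProductEquiv ℝ (Fin n) (b i), fun k x hx => ?_, fun k x hx => ?_⟩ <;>
    simp only [dotProductEquiv_apply_apply] at hx <;>
    rw [b.dotProduct_mulVec_eq_sum hM hb, hnorm, Finset.mul_sum] <;>
    refine Finset.sum_le_sum fun i _ => ?_
  · rcases lt_or_ge i k with hik | hki
    · simp [hx i hik]
    · exact mul_le_mul_of_nonneg_right (hμ.1 hki) (sq_nonneg _)
  · rcases lt_or_ge k i with hki | hik
    · simp [hx i hki]
    · exact mul_le_mul_of_nonneg_right (hμ.1 hik) (sq_nonneg _)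

end IsOrderedSpectrum

section DeleteVertex

variable {n : ℕ} (v : Fin (n + 1)) {x : Fin (n + 1) → ℝ}

theorem dotProduct_eq_comp_succAbove (hx : x v = 0) (w : Fin (n + 1) → ℝ) :
    x ⬝ᵥ w = (x ∘ v.succAbove) ⬝ᵥ (w ∘ v.succAbove) := by
  simp [dotProduct, Fin.sum_univ_succAbove _ v, hx]

theorem mulVec_comp_succAbove (M : Matrix (Fin (n + 1)) (Fin (n + 1)) ℝ) (hx : x v = 0) :
    (M *ᵥ x) ∘ v.succAbove = M.submatrix v.succAbove v.succAbove *ᵥ (x ∘ v.succAbove) := by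
  funext j
  simp only [Function.comp_apply, mulVec, dotProduct_comm (M _), dotProduct_eq_comp_succAbove v hx]
  exact dotProduct_comm _ _

end DeleteVertex

namespace IsOrderedSpectrum

variable {n : ℕ} {M : Matrix (Fin (n + 1)) (Fin (n + 1)) ℝ} {N : Matrix (Fin n) (Fin n) ℝ}
  {μ : Fin (n + 1) → ℝ} {ν : Fin n → ℝ}

theorem le_add_of_submatrix_le (hM : M.IsHermitian) (hN : N.IsHermitian)
    (hμ : IsOrderedSpectrum M μ) (hν : IsOrderedSpectrum N ν) (v : Fin (n + 1)) (c : ℝ)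
    (h : ∀ y, y ⬝ᵥ (M.submatrix v.succAbove v.succAbove *ᵥ y) ≤ y ⬝ᵥ (N *ᵥ y) + c * (y ⬝ᵥ y))
    (p : Fin n) : μ p.castSucc ≤ ν p + c := by
  obtain ⟨cM, hM_ge, -⟩ := hμ.exists_rayleigh_bounds hM
  obtain ⟨cN, -, hN_le⟩ := hν.exists_rayleigh_bounds hN
  -- `1 + p + (n - 1 - p) = n` linear conditions on `ℝ^{n+1}`
  let f : Unit ⊕ Finset.Iio p.castSucc ⊕ Finset.Ioi p → Module.Dual ℝ (Fin (n + 1) → ℝ) :=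
    Sum.elim (fun _ => LinearMap.proj v)
      (Sum.elim (fun i => cM i) fun j => cN j ∘ₗ LinearMap.funLeft ℝ ℝ v.succAbove)
  obtain ⟨x, hx0, hx⟩ := Module.exists_ne_zero_forall_apply_eq_zero f (by
    simp only [Fintype.card_sum, Fintype.card_unit, Fintype.card_coe, Fin.card_Iio, Fin.card_Ioi,
      Module.finrank_fintype_fun_eq_card, Fintype.card_fin, Fin.val_castSucc]
    omega)
  have hxv : x v = 0 := hx (.inl ())
  set y := x ∘ v.succAbove
  have hxx : x ⬝ᵥ x = y ⬝ᵥ y := dotProduct_eq_comp_succAbove v hxv x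
  have hpos : 0 < x ⬝ᵥ x := by simpa using dotProduct_self_star_pos_iff.mpr hx0
  have key : μ p.castSucc * (x ⬝ᵥ x) ≤ (ν p + c) * (x ⬝ᵥ x) := calc
    μ p.castSucc * (x ⬝ᵥ x) ≤ x ⬝ᵥ (M *ᵥ x) :=
      hM_ge _ x fun i hi => hx (.inr (.inl ⟨i, Finset.mem_Iio.mpr hi⟩))
    _ = y ⬝ᵥ (M.submatrix v.succAbove v.succAbove *ᵥ y) := by
      rw [dotProduct_eq_comp_succAbove v hxv, mulVec_comp_succAbove v M hxv]
    _ ≤ y ⬝ᵥ (N *ᵥ y) + c * (y ⬝ᵥ y) := h y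
    _ ≤ ν p * (y ⬝ᵥ y) + c * (y ⬝ᵥ y) := by
      gcongr
      exact hN_le p y fun j hj => hx (.inr (.inr ⟨j, Finset.mem_Ioi.mpr hj⟩))
    _ = (ν p + c) * (x ⬝ᵥ x) := by rw [hxx]; ring
  exact le_of_mul_le_mul_right key hpos

theorem le_add_of_le_submatrix (hM : M.IsHermitian) (hN : N.IsHermitian)
    (hμ : IsOrderedSpectrum M μ) (hν : IsOrderedSpectrum N ν) (v : Fin (n + 1)) (c : ℝ)
    (h : ∀ y, y ⬝ᵥ (N *ᵥ y) ≤ y ⬝ᵥ (M.submatrix v.succAbove v.succAbove *ᵥ y) + c * (y ⬝ᵥ y))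
    (p : Fin n) : ν p ≤ μ p.succ + c := by
  obtain ⟨cM, -, hM_le⟩ := hμ.exists_rayleigh_bounds hM
  obtain ⟨cN, hN_ge, -⟩ := hν.exists_rayleigh_bounds hN
  let f : Unit ⊕ Finset.Iio p ⊕ Finset.Ioi p.succ → Module.Dual ℝ (Fin (n + 1) → ℝ) :=
    Sum.elim (fun _ => LinearMap.proj v)
      (Sum.elim (fun j => cN j ∘ₗ LinearMap.funLeft ℝ ℝ v.succAbove) fun i => cM i)
  obtain ⟨x, hx0, hx⟩ := Module.exists_ne_zero_forall_apply_eq_zero f (by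
    simp only [Fintype.card_sum, Fintype.card_unit, Fintype.card_coe, Fin.card_Iio, Fin.card_Ioi,
      Module.finrank_fintype_fun_eq_card, Fintype.card_fin, Fin.val_succ]
    omega)
  have hxv : x v = 0 := hx (.inl ())
  set y := x ∘ v.succAbove
  have hxx : x ⬝ᵥ x = y ⬝ᵥ y := dotProduct_eq_comp_succAbove v hxv x
  have hpos : 0 < x ⬝ᵥ x := by simpa using dotProduct_self_star_pos_iff.mpr hx0
  have key : ν p * (x ⬝ᵥ x) ≤ (μ p.succ + c) * (x ⬝ᵥ x) := calc
    ν p * (x ⬝ᵥ x) = ν p * (y ⬝ᵥ y) := by rw [hxx]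
    _ ≤ y ⬝ᵥ (N *ᵥ y) := hN_ge _ y fun j hj => hx (.inr (.inl ⟨j, Finset.mem_Iio.mpr hj⟩))
    _ ≤ y ⬝ᵥ (M.submatrix v.succAbove v.succAbove *ᵥ y) + c * (y ⬝ᵥ y) := h y
    _ = x ⬝ᵥ (M *ᵥ x) + c * (x ⬝ᵥ x) := by
      rw [dotProduct_eq_comp_succAbove v hxv, mulVec_comp_succAbove v M hxv, hxx]
    _ ≤ μ p.succ * (x ⬝ᵥ x) + c * (x ⬝ᵥ x) := by
      gcongr
      exact hM_le _ x fun i hi => hx (.inr (.inr ⟨i, Finset.mem_Ioi.mpr hi⟩))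
    _ = (μ p.succ + c) * (x ⬝ᵥ x) := by ring
  exact le_of_mul_le_mul_right key hpos

end IsOrderedSpectrum

theorem dotProduct_diagonal_mulVec_nonneg {n : Type*} [Fintype n] [DecidableEq n] {d : n → ℝ}
    (hd : ∀ i, 0 ≤ d i) (y : n → ℝ) : 0 ≤ y ⬝ᵥ (diagonal d *ᵥ y) := by
  simp only [dotProduct, mulVec_diagonal]
  exact Finset.sum_nonneg fun i _ => by nlinarith [hd i, mul_self_nonneg (y i)]

theorem dotProduct_diagonal_mulVec_le {n : Type*} [Fintype n] [DecidableEq n] {d : n → ℝ} {c : ℝ}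
    (hd : ∀ i, d i ≤ c) (y : n → ℝ) : y ⬝ᵥ (diagonal d *ᵥ y) ≤ c * (y ⬝ᵥ y) := by
  simp only [dotProduct, mulVec_diagonal, Finset.mul_sum]
  exact Finset.sum_le_sum fun i _ => by nlinarith [hd i, mul_self_nonneg (y i)]

theorem lap_isHermitian {n : ℕ} {A : Matrix (Fin n) (Fin n) ℝ} (hA : A.IsSymm) :
    (lap A).IsHermitian :=
  isHermitian_iff_isSymm.mpr ((isSymm_diagonal _).sub hA)

theorem deg_eq_sum {n : ℕ} (A : Matrix (Fin n) (Fin n) ℝ) (i : Fin n) :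
    (deg A i : ℝ) = ∑ j, if A i j = 0 then 0 else 1 := by
  classical
  rw [deg, Set.ncard_eq_toFinset_card', Set.toFinset_ofPred, Finset.natCast_card_filter]
  simp only [ite_not]

theorem deg_succAbove {n : ℕ} (A : Matrix (Fin (n + 1)) (Fin (n + 1)) ℝ) (v : Fin (n + 1))
    (j : Fin n) : (deg A (v.succAbove j) : ℝ) =
      deg (deleteVertex A v) j + if A (v.succAbove j) v = 0 then 0 else 1 := by
  rw [deg_eq_sum, deg_eq_sum, Fin.sum_univ_succAbove _ v, add_comm]
  rfl

theorem lap_submatrix_succAbove {n : ℕ} (A : Matrix (Fin (n + 1)) (Fin (n + 1)) ℝ)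
    (v : Fin (n + 1)) :
    (lap A).submatrix v.succAbove v.succAbove =
      lap (deleteVertex A v) + diagonal fun j => if A (v.succAbove j) v = 0 then 0 else 1 := by
  have hdiag : (diagonal fun i => (deg A i : ℝ)).submatrix v.succAbove v.succAbove =
      (diagonal fun j => (deg (deleteVertex A v) j : ℝ)) +
        diagonal fun j => if A (v.succAbove j) v = 0 then 0 else 1 := by
    rw [submatrix_diagonal _ _ Fin.succAbove_right_injective, diagonal_add]
    exact congrArg diagonal (funext (deg_succAbove A v))
  rw [lap, lap, submatrix_sub, Pi.sub_apply, Pi.sub_apply, hdiag, deleteVertex]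
  abel

/-- deleting any vertex from a signed graph, the ordered Laplacian spectra
satisfy alpha_p <= beta_p + 1 <= alpha_{p+1} + 1 for p = 1,...,m. -/
theorem stmt0 (m : ℕ) (A : Matrix (Fin (m+1)) (Fin (m+1)) ℝ) (hA : IsSignedAdj A)
    (v : Fin (m+1)) (α : Fin (m+1) → ℝ) (β : Fin m → ℝ)
    (hα : IsOrderedSpectrum (lap A) α)
    (hβ : IsOrderedSpectrum (lap (deleteVertex A v)) β) :
    ∀ p : Fin m, α p.castSucc ≤ β p + 1 ∧ β p + 1 ≤ α p.succ + 1 := by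
  intro p
  have hL : (lap A).IsHermitian := lap_isHermitian hA.1
  have hL' : (lap (deleteVertex A v)).IsHermitian := lap_isHermitian (hA.1.submatrix _)
  set d : Fin m → ℝ := fun j => if A (v.succAbove j) v = 0 then 0 else 1
  have hd0 (j : Fin m) : 0 ≤ d j := by simp only [d]; split_ifs <;> norm_num
  have hd1 (j : Fin m) : d j ≤ 1 := by simp only [d]; split_ifs <;> norm_num
  have hq (y : Fin m → ℝ) : y ⬝ᵥ ((lap A).submatrix v.succAbove v.succAbove *ᵥ y) =
      y ⬝ᵥ (lap (deleteVertex A v) *ᵥ y) + y ⬝ᵥ (diagonal d *ᵥ y) := by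
    rw [lap_submatrix_succAbove, add_mulVec, dotProduct_add]
  constructor
  · refine hα.le_add_of_submatrix_le hL hL' hβ v 1 (fun y => ?_) p
    rw [hq]
    exact add_le_add_right (dotProduct_diagonal_mulVec_le hd1 y) _
  · have hβα : β p ≤ α p.succ + 0 := hα.le_add_of_le_submatrix hL hL' hβ v 0 (fun y => by
      rw [hq, zero_mul, add_zero]
      exact le_add_of_nonneg_right (dotProduct_diagonal_mulVec_nonneg hd0 y)) p
    linarith
end

section
/- Let m ≥ 2. Let Γ = (P_{m+1}, σ_1) be a signed path of order m+1 with an arbitrary signature σ_1 and ordered Laplacian spectrum (α_1, α_2, …, α_{m+1}), and let Γ' = (P_m, σ_2) be a signed path of order m with an arbitrary signature σ_2 and ordered Laplacian spectrum (β_1, β_2, …, β_m). Then α_p ≤ β_p ≤ α_{p+1} for every p = 1, 2, …, m. -/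
/-!
A signed path is balanced, so switching (conjugating by a diagonal `±1` matrix) turns its
Laplacian into that of the unsigned path `P_n`. That Laplacian has the `n` distinct eigenvalues
`2 - 2 cos (k π / n)`, `0 ≤ k < n`, with eigenvectors `j ↦ cos ((j + 1/2) k π / n)`: the
cosine recurrence gives the interior rows, and the half-integer shift makes the end rows work.
Both ordered spectra are therefore explicit, and the interlacing reduces to
`k / (m + 1) ≤ k / m ≤ (k + 1) / (m + 1)` for `k < m`, since `cos` decreases on `[0, π]`.
-/

open Polynomial

/-- A signed path on `Fin n`: vertices `i` and `j` are adjacent iff their indices are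
consecutive. -/
def IsSignedPath {n : ℕ} (A : Matrix (Fin n) (Fin n) ℝ) : Prop :=
  IsSignedAdj A ∧ ∀ i j : Fin n, A i j ≠ 0 ↔ (j.val = i.val + 1 ∨ i.val = j.val + 1)

open Matrix Real

theorem Matrix.isRoot_charpoly_of_mulVec_eq_smul {n : Type*} [Fintype n] [DecidableEq n]
    {K : Type*} [Field K] {M : Matrix n n K} {x : K} {w : n → K} (hw : w ≠ 0)
    (h : M *ᵥ w = x • w) : M.charpoly.IsRoot x := by
  rw [← Matrix.charpoly_toLin', ← Module.End.hasEigenvalue_iff_isRoot_charpoly]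
  exact Module.End.hasEigenvalue_of_hasEigenvector
    (Module.End.hasEigenvector_iff.mpr ⟨Module.End.mem_eigenspace_iff.mpr h, hw⟩)

theorem Monotone.eq_of_map_univ_eq {n : ℕ} {μ ν : Fin n → ℝ} (hμ : Monotone μ)
    (hν : Monotone ν) (h : Finset.univ.val.map μ = Finset.univ.val.map ν) : μ = ν := by
  rw [Fin.univ_val_map, Fin.univ_val_map, Multiset.coe_eq_coe] at h
  exact List.ofFn_injective <| h.eq_of_sortedLE (List.sortedLE_ofFn_iff.mpr hμ)
    (List.sortedLE_ofFn_iff.mpr hν)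

theorem IsOrderedSpectrum.eq_of_isRoot {n : ℕ} {M : Matrix (Fin n) (Fin n) ℝ}
    {μ ν : Fin n → ℝ} (hμ : IsOrderedSpectrum M μ) (hν : StrictMono ν)
    (hroot : ∀ k, M.charpoly.IsRoot (ν k)) : μ = ν := by
  have hroots : M.charpoly.roots = Finset.univ.val.map μ := by
    rw [hμ.2, Finset.prod_eq_multiset_prod, ← roots_multiset_prod_X_sub_C (Finset.univ.val.map μ),
      Multiset.map_map]
    rfl
  have hle : Finset.univ.val.map ν ≤ M.charpoly.roots := by
    rw [Multiset.le_iff_subset (Finset.univ.nodup.map hν.injective)]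
    intro x hx
    obtain ⟨k, -, rfl⟩ := Multiset.mem_map.mp hx
    exact (mem_roots M.charpoly_monic.ne_zero).mpr (hroot k)
  refine hμ.1.eq_of_map_univ_eq hν.monotone (hroots ▸ ?_)
  exact (Multiset.eq_of_le_of_card_le hle (by simp [hroots])).symm

theorem IsSignedAdj.sq_eq_one {n : ℕ} {A : Matrix (Fin n) (Fin n) ℝ} (hA : IsSignedAdj A)
    {i j : Fin n} (h : A i j ≠ 0) : A i j ^ 2 = 1 := by
  rcases hA.2.2 i j with h' | h' | h' <;> simp_all

theorem Finset.sum_range_ite_eq_succ_or_eq_succ {n i : ℕ} (hi : i < n) (f : ℤ → ℝ) :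
    ∑ j ∈ range n, (if j = i + 1 ∨ i = j + 1 then f j else 0)
      = (if 0 < i then f (i - 1) else 0) + (if i + 1 < n then f (i + 1) else 0) := by
  have hsplit : ∀ j, (if j = i + 1 ∨ i = j + 1 then f j else 0)
      = (if j + 1 = i then f j else 0) + (if j = i + 1 then f j else 0) := by
    intro j
    by_cases h : j = i + 1
    · simp [h, show i + 1 + 1 ≠ i by omega]
    · simp [h, eq_comm]
  rw [sum_congr rfl fun j _ => hsplit j, sum_add_distrib, sum_ite_eq']
  simp only [mem_range, Nat.cast_add, Nat.cast_one]
  congr 1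
  cases i with
  | zero => simp
  | succ i => simp [sum_ite_eq', show i < n by omega]

noncomputable def pathLapEigenvalue (n k : ℕ) : ℝ := 2 - 2 * cos (k / n * π)

theorem pathLapEigenvalue_le_of_div_le {n n' k k' : ℕ} (h : (k : ℝ) / n ≤ k' / n')
    (hk' : k' ≤ n') : pathLapEigenvalue n k ≤ pathLapEigenvalue n' k' := by
  have hk'n' : (k' : ℝ) / n' ≤ 1 := div_le_one_of_le₀ (by exact_mod_cast hk') (by positivity)
  have := cos_le_cos_of_nonneg_of_le_pi (by positivity) (by nlinarith [pi_pos])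
    (mul_le_mul_of_nonneg_right h pi_pos.le)
  unfold pathLapEigenvalue
  linarith

theorem pathLapEigenvalue_strictMono (n : ℕ) :
    StrictMono fun k : Fin n => pathLapEigenvalue n k := by
  intro k k' hkk'
  have hn : (0 : ℝ) < n := by exact_mod_cast k.pos
  have hlt : (k : ℝ) / n < k' / n := div_lt_div_of_pos_right (by exact_mod_cast hkk') hn
  have hk'n : (k' : ℝ) / n ≤ 1 := div_le_one_of_le₀ (by exact_mod_cast k'.isLt.le) hn.le
  have := cos_lt_cos_of_nonneg_of_le_pi (by positivity) (by nlinarith [pi_pos])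
    (mul_lt_mul_of_pos_right hlt pi_pos)
  unfold pathLapEigenvalue
  linarith

theorem pathLapEigenvalue_succ_le {m p : ℕ} (hp : p < m) :
    pathLapEigenvalue (m + 1) p ≤ pathLapEigenvalue m p := by
  have hm : (0 : ℝ) < m := by exact_mod_cast p.zero_le.trans_lt hp
  exact pathLapEigenvalue_le_of_div_le
    (div_le_div_of_nonneg_left (by positivity) hm (by push_cast; linarith)) hp.le

theorem pathLapEigenvalue_le_succ_succ {m p : ℕ} (hp : p < m) :
    pathLapEigenvalue m p ≤ pathLapEigenvalue (m + 1) (p + 1) := by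
  refine pathLapEigenvalue_le_of_div_le ?_ (by omega)
  have hm : (0 : ℝ) < m := by exact_mod_cast p.zero_le.trans_lt hp
  have hpm : (p : ℝ) ≤ m := by exact_mod_cast hp.le
  rw [div_le_div_iff₀ hm (by positivity)]
  push_cast
  nlinarith

namespace IsSignedPath

variable {n : ℕ} {A : Matrix (Fin n) (Fin n) ℝ}

theorem exists_switching (hA : IsSignedPath A) :
    ∃ s : Fin n → ℝ, (∀ i, s i ^ 2 = 1) ∧ ∀ i j, A i j ≠ 0 → A i j = s i * s j := by
  let e (t : ℕ) : ℝ := if h : t + 1 < n then A ⟨t, by omega⟩ ⟨t + 1, h⟩ else 1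
  have he : ∀ t, e t ^ 2 = 1 := fun t => by
    unfold e
    split_ifs with h
    · exact hA.1.sq_eq_one ((hA.2 _ _).mpr (Or.inl rfl))
    · norm_num
  let s (i : Fin n) : ℝ := ∏ t ∈ Finset.range i, e t
  have hs : ∀ i, s i ^ 2 = 1 := fun i => by simp [s, ← Finset.prod_pow, he]
  have hstep : ∀ i j : Fin n, (j : ℕ) = i + 1 → A i j = s i * s j := by
    intro i j hij
    have hAe : A i j = e i := by
      simp only [e, dif_pos (hij ▸ j.isLt : (i : ℕ) + 1 < n)]
      congr; exact Fin.ext hij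
    have hsj : s j = s i * e i := by simp only [s, hij, Finset.prod_range_succ]
    rw [hsj, hAe]
    linear_combination (-e i) * hs i
  refine ⟨s, hs, fun i j hij => ?_⟩
  rcases (hA.2 i j).mp hij with h | h
  · exact hstep i j h
  · rw [← hA.1.1.apply i j, hstep j i h, mul_comm]

theorem sum_ite_adj (hA : IsSignedPath A) (i : Fin n) (f : ℤ → ℝ) :
    ∑ j, (if A i j ≠ 0 then f (j : ℕ) else 0)
      = (if 0 < (i : ℕ) then f ((i : ℕ) - 1) else 0)
        + (if (i : ℕ) + 1 < n then f ((i : ℕ) + 1) else 0) := by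
  simp_rw [hA.2 i]
  rw [Fin.sum_univ_eq_sum_range (fun j => if j = i + 1 ∨ i = j + 1 then f j else 0),
    Finset.sum_range_ite_eq_succ_or_eq_succ i.isLt]

theorem deg_eq (hA : IsSignedPath A) (i : Fin n) :
    (deg A i : ℝ) = (if 0 < (i : ℕ) then 1 else 0) + (if (i : ℕ) + 1 < n then 1 else 0) := by
  rw [← hA.sum_ite_adj i fun _ => 1, Finset.sum_boole, deg, Set.ncard_eq_toFinset_card']
  simp

variable {s : Fin n → ℝ}

theorem lap_mulVec_switch_apply (hA : IsSignedPath A) (hs : ∀ i, s i ^ 2 = 1)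
    (hsA : ∀ i j, A i j ≠ 0 → A i j = s i * s j) (f : ℤ → ℝ) (i : Fin n) :
    (lap A *ᵥ fun j => s j * f (j : ℕ)) i
      = s i * ((if 0 < (i : ℕ) then f (i : ℕ) - f ((i : ℕ) - 1) else 0)
        + (if (i : ℕ) + 1 < n then f (i : ℕ) - f ((i : ℕ) + 1) else 0)) := by
  have hterm : ∀ j, A i j * (s j * f (j : ℕ)) = s i * (if A i j ≠ 0 then f (j : ℕ) else 0) := by
    intro j
    split_ifs with h
    · rw [hsA i j h]
      linear_combination (s i * f (j : ℕ)) * hs j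
    · simp [not_not.mp h]
  rw [lap, sub_mulVec, Pi.sub_apply, mulVec_diagonal, mulVec, dotProduct,
    Finset.sum_congr rfl fun j _ => hterm j, ← Finset.mul_sum, hA.sum_ite_adj, hA.deg_eq]
  split_ifs <;> ring

/-- The reflecting boundary conditions `f (-1) = f 0` and `f n = f (n - 1)` account for the
missing neighbours of the two end vertices. -/
theorem lap_mulVec_switch_eq_smul (hA : IsSignedPath A) (hs : ∀ i, s i ^ 2 = 1)
    (hsA : ∀ i j, A i j ≠ 0 → A i j = s i * s j) {f : ℤ → ℝ} {c : ℝ}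
    (hrec : ∀ j, f (j - 1) + f (j + 1) = c * f j) (hleft : f (-1) = f 0)
    (hright : f n = f (n - 1)) :
    (lap A *ᵥ fun j => s j * f (j : ℕ)) = (2 - c) • fun j => s j * f (j : ℕ) := by
  ext i
  have hi := i.isLt
  have h0 : (if 0 < (i : ℕ) then f (i : ℕ) - f ((i : ℕ) - 1) else 0)
      = f (i : ℕ) - f ((i : ℕ) - 1) := by
    split_ifs with h
    · rfl
    · simp [show (i : ℕ) = 0 by omega, hleft]
  have h1 : (if (i : ℕ) + 1 < n then f (i : ℕ) - f ((i : ℕ) + 1) else 0)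
      = f (i : ℕ) - f ((i : ℕ) + 1) := by
    split_ifs with h
    · rfl
    · have hin : ((i : ℕ) : ℤ) = n - 1 := by omega
      simp [hin, hright]
  rw [hA.lap_mulVec_switch_apply hs hsA, h0, h1, Pi.smul_apply, smul_eq_mul]
  linear_combination (-s i) * hrec (i : ℕ)

theorem isRoot_charpoly_lap (hA : IsSignedPath A) (k : Fin n) :
    (lap A).charpoly.IsRoot (pathLapEigenvalue n k) := by
  obtain ⟨s, hs, hsA⟩ := hA.exists_switching
  set θ : ℝ := k / n * π with hθ
  set f : ℤ → ℝ := fun j => cos ((j + 1 / 2) * θ)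
  have hn : (0 : ℝ) < n := by exact_mod_cast k.pos
  have hθ0 : 0 ≤ θ := by positivity
  have hθπ : θ < π := by
    have : (k : ℝ) / n < 1 := (div_lt_one hn).mpr (by exact_mod_cast k.isLt)
    nlinarith [pi_pos]
  have hrec : ∀ j, f (j - 1) + f (j + 1) = 2 * cos θ * f j := fun j => by
    simp only [f, Int.cast_sub, Int.cast_add, Int.cast_one]
    rw [mul_right_comm, two_mul_cos_mul_cos]
    ring_nf
  have hleft : f (-1) = f 0 := by
    simp only [f]
    rw [← cos_neg]
    push_cast
    ring_nf
  have hright : f n = f (n - 1) := by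
    have hnθ : (n : ℝ) * θ = k * π := by rw [hθ]; field_simp
    simp only [f]
    push_cast
    rw [show ((n : ℝ) + 1 / 2) * θ = θ / 2 + k * π by linear_combination hnθ,
      show ((n : ℝ) - 1 + 1 / 2) * θ = k * π - θ / 2 by linear_combination hnθ,
      cos_add_nat_mul_pi, cos_nat_mul_pi_sub]
  refine Matrix.isRoot_charpoly_of_mulVec_eq_smul (w := fun j => s j * f (j : ℕ)) ?_
    (hA.lap_mulVec_switch_eq_smul hs hsA hrec hleft hright)
  intro hw
  have h0 := congrFun hw ⟨0, k.pos⟩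
  have hcos : 0 < cos (θ / 2) := cos_pos_of_mem_Ioo ⟨by linarith [pi_pos], by linarith⟩
  have hs0 : s ⟨0, k.pos⟩ ≠ 0 := fun h => by simpa [h] using hs ⟨0, k.pos⟩
  simp only [f, Pi.zero_apply, mul_eq_zero] at h0
  push_cast at h0
  rcases h0 with h | h
  · exact hs0 h
  · rw [zero_add, one_div_mul_eq_div] at h
    linarith

theorem eq_pathLapEigenvalue_of_isOrderedSpectrum (hA : IsSignedPath A) {μ : Fin n → ℝ}
    (hμ : IsOrderedSpectrum (lap A) μ) : μ = fun k : Fin n => pathLapEigenvalue n k :=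
  hμ.eq_of_isRoot (pathLapEigenvalue_strictMono n) hA.isRoot_charpoly_lap

end IsSignedPath

theorem stmt6_general (m : ℕ)
    (A : Matrix (Fin (m+1)) (Fin (m+1)) ℝ) (hA : IsSignedPath A)
    (B : Matrix (Fin m) (Fin m) ℝ) (hB : IsSignedPath B)
    (α : Fin (m+1) → ℝ) (β : Fin m → ℝ)
    (hα : IsOrderedSpectrum (lap A) α) (hβ : IsOrderedSpectrum (lap B) β) :
    ∀ p : Fin m, α p.castSucc ≤ β p ∧ β p ≤ α p.succ := by
  rw [hA.eq_pathLapEigenvalue_of_isOrderedSpectrum hα,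
    hB.eq_pathLapEigenvalue_of_isOrderedSpectrum hβ]
  intro p
  exact ⟨pathLapEigenvalue_succ_le p.isLt, pathLapEigenvalue_le_succ_succ p.isLt⟩

/-- for arbitrary signed paths of orders m+1 and m (m >= 2),
alpha_p <= beta_p <= alpha_{p+1} for p = 1,...,m. -/
theorem stmt6 (m : ℕ) (hm : 2 ≤ m)
    (A : Matrix (Fin (m+1)) (Fin (m+1)) ℝ) (hA : IsSignedPath A)
    (B : Matrix (Fin m) (Fin m) ℝ) (hB : IsSignedPath B)
    (α : Fin (m+1) → ℝ) (β : Fin m → ℝ)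
    (hα : IsOrderedSpectrum (lap A) α) (hβ : IsOrderedSpectrum (lap B) β) :
    ∀ p : Fin m, α p.castSucc ≤ β p ∧ β p ≤ α p.succ :=
  stmt6_general m A hA B hB α β hα hβ
end

section
/- Let Γ be a signed graph of order m with ordered Laplacian spectrum (α_1, α_2, …, α_m) and ordered net-Laplacian spectrum (β_1, β_2, …, β_m). Let δ⁻(Γ) = min_i d_i⁻ and Δ⁻(Γ) = max_i d_i⁻ be the minimum and maximum negative vertex degrees of Γ. Then β_p + 2·δ⁻(Γ) ≤ α_p ≤ β_p + 2·Δ⁻(Γ) for every p = 1, 2, …, m. -/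
open Polynomial

/-!
The two Laplacians differ by a diagonal matrix, `L - N = 2 · diag(d⁻)`, so in the Loewner order
`N + 2δ⁻ ≤ L ≤ N + 2Δ⁻`. The bounds are then Weyl's monotonicity of ordered eigenvalues, proved
in Courant–Fischer style: if `T + c ≤ S`, the span of the eigenvectors of `S` with eigenvalue
`≤ a` and the span of those of `T` with eigenvalue `≥ a'` meet in a nonzero vector `x` as soon
as their dimensions add up to more than `dim E`, and then
`(a' + c)‖x‖² ≤ ⟪x, T x⟫ + c‖x‖² ≤ ⟪x, S x⟫ ≤ a‖x‖²`.
-/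

open Finset Module Submodule
open scoped InnerProductSpace

theorem LinearIndependent.finrank_span_image {K M ι : Type*} [DivisionRing K]
    [AddCommGroup M] [Module K M] {v : ι → M} (hv : LinearIndependent K v) (s : Finset ι) :
    finrank K (span K (v '' s)) = #s := by
  rw [Set.image_eq_range]
  exact (finrank_span_eq_card (hv.comp _ Subtype.val_injective)).trans (by simp)

namespace OrthonormalBasis

variable {E ι : Type*} [NormedAddCommGroup E] [InnerProductSpace ℝ E] [Fintype ι]
  {T : E →ₗ[ℝ] E} {b : OrthonormalBasis ι ℝ E} {μ : ι → ℝ}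

theorem repr_apply_of_apply_eq_smul (hb : ∀ i, T (b i) = μ i • b i) (x : E) (i : ι) :
    b.repr (T x) i = μ i * b.repr x i := by
  classical
  conv_lhs => rw [← b.sum_repr x]
  simp [hb, smul_smul, OrthonormalBasis.repr_self, Pi.single_apply, mul_comm]

theorem real_inner_apply_self_eq_sum (hb : ∀ i, T (b i) = μ i • b i) (x : E) :
    ⟪x, T x⟫_ℝ = ∑ i, μ i * b.repr x i ^ 2 := by
  rw [← b.repr.inner_map_map, PiLp.inner_apply]
  refine sum_congr rfl fun i _ => ?_
  rw [repr_apply_of_apply_eq_smul hb, RCLike.inner_apply, conj_trivial]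
  ring

theorem real_inner_apply_self_le_of_mem_span (hb : ∀ i, T (b i) = μ i • b i) {s : Set ι}
    {r : ℝ} (hr : ∀ i ∈ s, μ i ≤ r) {x : E} (hx : x ∈ span ℝ (b '' s)) :
    ⟪x, T x⟫_ℝ ≤ r * ‖x‖ ^ 2 := by
  have hsupp : ∀ i ∉ s, b.repr x i = 0 := fun i hi => by
    rw [← b.coe_toBasis, b.toBasis.mem_span_image] at hx
    simpa using Finsupp.notMem_support_iff.mp fun h => hi (hx h)
  rw [real_inner_apply_self_eq_sum hb, ← b.sum_sq_inner_right, mul_sum]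
  refine sum_le_sum fun i _ => ?_
  rw [← b.repr_apply_apply]
  by_cases hi : i ∈ s
  · exact mul_le_mul_of_nonneg_right (hr i hi) (sq_nonneg _)
  · simp [hsupp i hi]

theorem le_real_inner_apply_self_of_mem_span (hb : ∀ i, T (b i) = μ i • b i) {s : Set ι}
    {r : ℝ} (hr : ∀ i ∈ s, r ≤ μ i) {x : E} (hx : x ∈ span ℝ (b '' s)) :
    r * ‖x‖ ^ 2 ≤ ⟪x, T x⟫_ℝ := by
  have := real_inner_apply_self_le_of_mem_span (T := -T) (μ := -μ) (by simp [hb])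
    (fun i hi => neg_le_neg (hr i hi)) hx
  simp only [LinearMap.neg_apply, inner_neg_right] at this
  linarith

end OrthonormalBasis

namespace LinearMap

variable {E ι κ : Type*} [NormedAddCommGroup E] [InnerProductSpace ℝ E] [Fintype ι] [Fintype κ]

theorem add_le_of_finrank_lt_card_add_card {S T : E →ₗ[ℝ] E}
    {bS : OrthonormalBasis ι ℝ E} {bT : OrthonormalBasis κ ℝ E} {μS : ι → ℝ} {μT : κ → ℝ}
    (hS : ∀ i, S (bS i) = μS i • bS i) (hT : ∀ j, T (bT j) = μT j • bT j) {c : ℝ}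
    (hST : T + c • 1 ≤ S) {a a' : ℝ}
    (hcard : finrank ℝ E < #{i | μS i ≤ a} + #{j | a' ≤ μT j}) :
    a' + c ≤ a := by
  have : FiniteDimensional ℝ E := bS.toBasis.finiteDimensional_of_finite
  set V := span ℝ (bS '' ↑({i | μS i ≤ a} : Finset ι))
  set U := span ℝ (bT '' ↑({j | a' ≤ μT j} : Finset κ))
  have hVU : V ⊓ U ≠ ⊥ := by
    have hdim := finrank_sup_add_finrank_inf_eq V U
    rw [bS.orthonormal.linearIndependent.finrank_span_image,
      bT.orthonormal.linearIndependent.finrank_span_image] at hdim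
    have hsup := (V ⊔ U).finrank_le
    exact one_le_finrank_iff.mp (by omega)
  obtain ⟨x, ⟨hxV, hxU⟩, hx0⟩ := (V ⊓ U).exists_mem_ne_zero_of_ne_bot hVU
  have hSx : ⟪x, S x⟫_ℝ ≤ a * ‖x‖ ^ 2 :=
    bS.real_inner_apply_self_le_of_mem_span hS (by simp) hxV
  have hTx : a' * ‖x‖ ^ 2 ≤ ⟪x, T x⟫_ℝ :=
    bT.le_real_inner_apply_self_of_mem_span hT (by simp) hxU
  have hgap : 0 ≤ ⟪x, S x⟫_ℝ - ⟪x, T x⟫_ℝ - c * ‖x‖ ^ 2 := by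
    simpa [inner_sub_right, inner_add_right, inner_smul_right, real_inner_self_eq_norm_sq,
      sub_sub] using ((le_def _ _).mp hST).re_inner_nonneg_right x
  have hx : 0 < ‖x‖ ^ 2 := by positivity
  nlinarith

end LinearMap

section SpectrumComparison

open Matrix
open scoped MatrixOrder

theorem Matrix.IsHermitian.toEuclideanLin_eigenvectorBasis {𝕜 ι : Type*} [RCLike 𝕜] [Fintype ι]
    [DecidableEq ι] {M : Matrix ι ι 𝕜} (hM : M.IsHermitian) (i : ι) :
    toEuclideanLin M (hM.eigenvectorBasis i) = hM.eigenvalues i • hM.eigenvectorBasis i :=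
  WithLp.ofLp_injective _ (by simpa using hM.mulVec_eigenvectorBasis i)

theorem Matrix.toEuclideanLin_mono {𝕜 ι : Type*} [RCLike 𝕜] [Fintype ι] [DecidableEq ι]
    {B C : Matrix ι ι 𝕜} (h : C ≤ B) : toEuclideanLin C ≤ toEuclideanLin B := by
  rw [LinearMap.le_def, ← map_sub]
  exact isPositive_toEuclideanLin_iff.mpr h

variable {n : ℕ}

namespace IsOrderedSpectrum

variable {M : Matrix (Fin n) (Fin n) ℝ} {μ : Fin n → ℝ}

theorem card_filter_eigenvalues (h : IsOrderedSpectrum M μ) (hM : M.IsHermitian)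
    (P : ℝ → Prop) [DecidablePred P] :
    #{i | P (hM.eigenvalues i)} = #{i | P (μ i)} := by
  have hroots : ∀ f : Fin n → ℝ, (∏ i, (X - C (f i))).roots = univ.val.map f := fun f => by
    rw [roots_prod _ _ (prod_ne_zero_iff.mpr fun i _ => X_sub_C_ne_zero (f i))]
    simp
  have hmap : univ.val.map hM.eigenvalues = univ.val.map μ := by
    rw [← hroots, ← hroots, ← h.2, hM.charpoly_eq]
    rfl
  have hcard : ∀ f : Fin n → ℝ, #{i | P (f i)} = Multiset.card ((univ.val.map f).filter P) :=
    fun f => by rw [Multiset.filter_map, Multiset.card_map]; rfl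
  rw [hcard, hcard, hmap]

theorem succ_le_card_eigenvalues_le (h : IsOrderedSpectrum M μ) (hM : M.IsHermitian)
    (p : Fin n) : (p : ℕ) + 1 ≤ #{i | hM.eigenvalues i ≤ μ p} := by
  rw [h.card_filter_eigenvalues hM (· ≤ μ p), ← Fin.card_Iic]
  exact card_le_card fun i hi => by simpa using h.1 (mem_Iic.mp hi)

theorem sub_le_card_le_eigenvalues (h : IsOrderedSpectrum M μ) (hM : M.IsHermitian)
    (p : Fin n) : n - p ≤ #{i | μ p ≤ hM.eigenvalues i} := by
  rw [h.card_filter_eigenvalues hM (μ p ≤ ·), ← Fin.card_Ici]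
  exact card_le_card fun i hi => by simpa using h.1 (mem_Ici.mp hi)

variable {B C : Matrix (Fin n) (Fin n) ℝ} {α β : Fin n → ℝ}

theorem add_le_of_add_smul_one_le (hα : IsOrderedSpectrum B α) (hβ : IsOrderedSpectrum C β)
    (hB : B.IsHermitian) (hC : C.IsHermitian) {c : ℝ} (hBC : C + c • 1 ≤ B) (p : Fin n) :
    β p + c ≤ α p := by
  have hlin : toEuclideanLin C + c • 1 ≤ toEuclideanLin B := by
    simpa [toLpLin_one, ← Module.End.one_eq_id] using toEuclideanLin_mono hBC
  refine LinearMap.add_le_of_finrank_lt_card_add_card hB.toEuclideanLin_eigenvectorBasis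
    hC.toEuclideanLin_eigenvectorBasis hlin ?_
  have hα_card := hα.succ_le_card_eigenvalues_le hB p
  have hβ_card := hβ.sub_le_card_le_eigenvalues hC p
  rw [finrank_euclideanSpace_fin]
  omega

theorem add_le_and_le_add_of_sub_eq_diagonal (hα : IsOrderedSpectrum B α)
    (hβ : IsOrderedSpectrum C β) (hB : B.IsHermitian) (hC : C.IsHermitian) {d : Fin n → ℝ}
    (hd : B - C = diagonal d) {c c' : ℝ} (hc : ∀ i, c ≤ d i) (hc' : ∀ i, d i ≤ c')
    (p : Fin n) : β p + c ≤ α p ∧ α p ≤ β p + c' := by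
  have hlow : C + c • 1 ≤ B := by
    rw [le_iff, ← sub_sub, hd, smul_one_eq_diagonal, diagonal_sub]
    exact PosSemidef.diagonal fun i => sub_nonneg.mpr (hc i)
  have hup : B + (-c') • 1 ≤ C := by
    have hsub : C - (B + (-c') • 1) = diagonal fun i => c' - d i := by
      rw [← diagonal_sub, ← hd, ← smul_one_eq_diagonal, neg_smul]
      abel
    rw [le_iff, hsub]
    exact PosSemidef.diagonal fun i => by simpa using hc' i
  have hα_le := hβ.add_le_of_add_smul_one_le hα hC hB hup p
  exact ⟨hα.add_le_of_add_smul_one_le hβ hB hC hlow p, by linarith⟩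

end IsOrderedSpectrum

end SpectrumComparison

namespace IsSignedAdj

variable {n : ℕ} {A : Matrix (Fin n) (Fin n) ℝ}

theorem isHermitian (hA : IsSignedAdj A) : A.IsHermitian :=
  Matrix.isHermitian_iff_isSymm.mpr hA.1

theorem deg_sub_sum_eq (hA : IsSignedAdj A) (i : Fin n) :
    (deg A i : ℝ) - ∑ j, A i j = 2 * negDeg A i := by
  classical
  have hcount : ∀ P : Fin n → Prop, [DecidablePred P] →
      (({j | P j} : Set (Fin n)).ncard : ℝ) = ∑ j, if P j then 1 else 0 := fun P _ => by
    rw [Set.ncard_eq_toFinset_card', Set.toFinset_ofPred, Finset.natCast_card_filter]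
  rw [deg, negDeg, hcount, hcount, mul_sum, ← sum_sub_distrib]
  refine sum_congr rfl fun j _ => ?_
  rcases hA.2.2 i j with h | h | h <;> norm_num [h]

theorem lap_sub_netLap (hA : IsSignedAdj A) :
    lap A - netLap A = Matrix.diagonal fun i => 2 * (negDeg A i : ℝ) := by
  rw [lap, netLap, sub_sub_sub_cancel_right, Matrix.diagonal_sub]
  exact congrArg Matrix.diagonal (funext hA.deg_sub_sum_eq)

end IsSignedAdj

/-- with delta = min negative degree and Delta = max negative degree,
beta_p + 2*delta <= alpha_p <= beta_p + 2*Delta, where alpha is the ordered Laplacian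
spectrum and beta the ordered net-Laplacian spectrum. -/
theorem stmt8 (m : ℕ) (A : Matrix (Fin m) (Fin m) ℝ) (hA : IsSignedAdj A)
    (α β : Fin m → ℝ)
    (hα : IsOrderedSpectrum (lap A) α) (hβ : IsOrderedSpectrum (netLap A) β)
    (δ Δ : ℕ)
    (hδ : IsLeast (Set.range fun i => negDeg A i) δ)
    (hΔ : IsGreatest (Set.range fun i => negDeg A i) Δ) :
    ∀ p : Fin m, β p + 2 * (δ : ℝ) ≤ α p ∧ α p ≤ β p + 2 * (Δ : ℝ) := by
  have hAH := hA.isHermitian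
  refine hα.add_le_and_le_add_of_sub_eq_diagonal hβ
    ((Matrix.isHermitian_diagonal _).sub hAH) ((Matrix.isHermitian_diagonal _).sub hAH)
    hA.lap_sub_netLap (fun i => ?_) (fun i => ?_)
  · exact mul_le_mul_of_nonneg_left (Nat.cast_le.mpr (hδ.2 ⟨i, rfl⟩)) zero_le_two
  · exact mul_le_mul_of_nonneg_left (Nat.cast_le.mpr (hΔ.2 ⟨i, rfl⟩)) zero_le_two
end

section
/- Let Γ be a signed graph of order m and let Γ' = Γ − e be the signed graph obtained from Γ by deleting an edge e whose sign is negative. If (α_1, α_2, …, α_m) and (β_1, β_2, …, β_m) are the ordered net-Laplacian spectra of Γ and Γ' respectively, then α_p ≤ β_p ≤ α_{p+1} for every p = 1, 2, …, m, with the convention that α_{m+1} = m. -/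
open Polynomial

/-!
Deleting a negative edge `uv` raises the signed degrees of `u` and `v` by one, so the
net-Laplacian changes by the rank-one positive semidefinite matrix `x xᵀ` with `x = e_u - e_v`.
Interlacing then follows from a Courant–Fischer count: fewer than `m` orthogonality conditions
(to the eigenvectors of `α_j`, `j < p`, and of `β_j`, `j > p`) leave a nonzero test vector whose
Rayleigh quotient lies between `α_p` and `β_p`; adding `x` to the conditions makes both quadratic
forms agree on the test vector and gives `β_p ≤ α_{p+1}`. For the last index,
`yᵀ N y = ½ ∑ A_ij (y_i - y_j)² ≤ ½ ∑ (y_i - y_j)² ≤ m ‖y‖²` bounds every eigenvalue by `m`.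
-/

open Finset Matrix Module
open scoped RealInnerProductSpace

section Rayleigh

variable {E : Type*} [NormedAddCommGroup E] [InnerProductSpace ℝ E]
  {ι : Type*} [Fintype ι] {T : E →ₗ[ℝ] E} {b : OrthonormalBasis ι ℝ E} {α : ι → ℝ}

theorem OrthonormalBasis.inner_apply_self_eq_sum (hb : ∀ i, T (b i) = α i • b i) (y : E) :
    ⟪T y, y⟫ = ∑ i, α i * ⟪b i, y⟫ ^ 2 := by
  have hTy : T y = ∑ i, (⟪b i, y⟫ * α i) • b i := by
    conv_lhs => rw [← b.sum_repr' y]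
    simp only [map_sum, map_smul, hb, smul_smul]
  rw [hTy, sum_inner]
  refine Finset.sum_congr rfl fun i _ => ?_
  rw [real_inner_smul_left]
  ring

theorem OrthonormalBasis.eigenvalue_le_of_forall_inner_le_mul_norm_sq
    (hb : ∀ i, T (b i) = α i • b i) {c : ℝ} (hT : ∀ y, ⟪T y, y⟫ ≤ c * ‖y‖ ^ 2) (i : ι) :
    α i ≤ c := by
  simpa [hb, real_inner_smul_left, b.norm_eq_one] using hT (b i)

variable [LinearOrder ι]

theorem OrthonormalBasis.mul_norm_sq_le_inner_apply_self (hb : ∀ i, T (b i) = α i • b i)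
    (hα : Monotone α) {p : ι} {y : E} (hy : ∀ j < p, ⟪b j, y⟫ = 0) :
    α p * ‖y‖ ^ 2 ≤ ⟪T y, y⟫ := by
  rw [b.inner_apply_self_eq_sum hb, ← b.sum_sq_inner_right, Finset.mul_sum]
  refine Finset.sum_le_sum fun j _ => ?_
  rcases lt_or_ge j p with hj | hj
  · simp [hy j hj]
  · exact mul_le_mul_of_nonneg_right (hα hj) (sq_nonneg _)

theorem OrthonormalBasis.inner_apply_self_le_mul_norm_sq (hb : ∀ i, T (b i) = α i • b i)
    (hα : Monotone α) {p : ι} {y : E} (hy : ∀ j, p < j → ⟪b j, y⟫ = 0) :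
    ⟪T y, y⟫ ≤ α p * ‖y‖ ^ 2 := by
  rw [b.inner_apply_self_eq_sum hb, ← b.sum_sq_inner_right, Finset.mul_sum]
  refine Finset.sum_le_sum fun j _ => ?_
  rcases lt_or_ge p j with hj | hj
  · simp [hy j hj]
  · exact mul_le_mul_of_nonneg_right (hα hj) (sq_nonneg _)

end Rayleigh

theorem exists_ne_zero_forall_inner_eq_zero {E : Type*} [NormedAddCommGroup E]
    [InnerProductSpace ℝ E] [FiniteDimensional ℝ E] {s : Finset E}
    (hs : #s < finrank ℝ E) : ∃ y ≠ (0 : E), ∀ c ∈ s, ⟪c, y⟫ = 0 := by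
  have hK : Submodule.span ℝ (s : Set E) ≠ ⊤ := by
    intro h
    have := finrank_span_finset_le_card (R := ℝ) s
    rw [Set.finrank, h, finrank_top] at this
    omega
  obtain ⟨y, hy, hy0⟩ := Submodule.exists_mem_ne_zero_of_ne_bot
    (mt Submodule.orthogonal_eq_bot_iff.mp hK)
  exact ⟨y, hy0, fun c hc => Submodule.inner_right_of_mem_orthogonal
    (Submodule.subset_span hc) hy⟩

section Interlacing

variable {E : Type*} [NormedAddCommGroup E] [InnerProductSpace ℝ E] {n : ℕ}
  {T T' : E →ₗ[ℝ] E} {a b : OrthonormalBasis (Fin n) ℝ E} {α β : Fin n → ℝ}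

theorem eigenvalue_le_eigenvalue_of_forall_inner_le (ha : ∀ i, T (a i) = α i • a i)
    (hα : Monotone α) (hb : ∀ i, T' (b i) = β i • b i) (hβ : Monotone β)
    (hTT' : ∀ y, ⟪T y, y⟫ ≤ ⟪T' y, y⟫) (p : Fin n) : α p ≤ β p := by
  classical
  have : FiniteDimensional ℝ E := Module.Finite.of_basis a.toBasis
  have hcard : #((Iio p).image a ∪ (Ioi p).image b) < finrank ℝ E :=
    calc _ ≤ #(Iio p) + #(Ioi p) :=
          (card_union_le _ _).trans (add_le_add card_image_le card_image_le)
      _ < finrank ℝ E := by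
          rw [Fin.card_Iio, Fin.card_Ioi, finrank_eq_card_basis a.toBasis, Fintype.card_fin]
          omega
  obtain ⟨y, hy0, hy⟩ := exists_ne_zero_forall_inner_eq_zero hcard
  have hlow := a.mul_norm_sq_le_inner_apply_self ha hα (p := p) (y := y) fun j hj =>
    hy _ (mem_union_left _ (mem_image_of_mem a (mem_Iio.2 hj)))
  have hup := b.inner_apply_self_le_mul_norm_sq hb hβ (p := p) (y := y) fun j hj =>
    hy _ (mem_union_right _ (mem_image_of_mem b (mem_Ioi.2 hj)))
  exact le_of_mul_le_mul_right ((hlow.trans (hTT' y)).trans hup) (by positivity)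

theorem eigenvalue_le_eigenvalue_of_forall_inner_le_of_inner_eq_zero
    (ha : ∀ i, T (a i) = α i • a i) (hα : Monotone α) (hb : ∀ i, T' (b i) = β i • b i)
    (hβ : Monotone β) (x : E)
    (hTT' : ∀ y, ⟪x, y⟫ = 0 → ⟪T' y, y⟫ ≤ ⟪T y, y⟫) {p q : Fin n} (hpq : p < q) :
    β p ≤ α q := by
  classical
  have : FiniteDimensional ℝ E := Module.Finite.of_basis a.toBasis
  have hcard : #(insert x ((Iio p).image b ∪ (Ioi q).image a)) < finrank ℝ E :=
    calc _ ≤ #(Iio p) + #(Ioi q) + 1 := (card_insert_le _ _).trans <| add_le_add_left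
          ((card_union_le _ _).trans (add_le_add card_image_le card_image_le)) 1
      _ < finrank ℝ E := by
          rw [Fin.card_Iio, Fin.card_Ioi, finrank_eq_card_basis a.toBasis, Fintype.card_fin]
          omega
  obtain ⟨y, hy0, hy⟩ := exists_ne_zero_forall_inner_eq_zero hcard
  have hlow := b.mul_norm_sq_le_inner_apply_self hb hβ (p := p) (y := y) fun j hj =>
    hy _ (mem_insert_of_mem (mem_union_left _ (mem_image_of_mem b (mem_Iio.2 hj))))
  have hup := a.inner_apply_self_le_mul_norm_sq ha hα (p := q) (y := y) fun j hj =>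
    hy _ (mem_insert_of_mem (mem_union_right _ (mem_image_of_mem a (mem_Ioi.2 hj))))
  have hmid := hTT' y (hy x (mem_insert_self _ _))
  exact le_of_mul_le_mul_right ((hlow.trans hmid).trans hup) (by positivity)

end Interlacing

theorem Monotone.eq_of_prod_X_sub_C_eq {n : ℕ} {f g : Fin n → ℝ} (hf : Monotone f)
    (hg : Monotone g) (h : ∏ i, (X - C (f i)) = ∏ i, (X - C (g i))) : f = g := by
  have hroots (φ : Fin n → ℝ) : (∏ i, (X - C (φ i))).roots = (List.ofFn φ : Multiset ℝ) := by
    rw [← Fin.univ_val_map, ← roots_multiset_prod_X_sub_C (Finset.univ.val.map φ),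
      Multiset.map_map]
    rfl
  have hperm : (List.ofFn f).Perm (List.ofFn g) := by
    rw [← Multiset.coe_eq_coe, ← hroots, ← hroots, h]
  exact List.ofFn_injective (hperm.eq_of_sortedLE hf.sortedLE_ofFn hg.sortedLE_ofFn)

theorem Matrix.IsSymm.exists_orthonormalBasis_of_isOrderedSpectrum {n : ℕ}
    {M : Matrix (Fin n) (Fin n) ℝ} (hM : M.IsSymm) {α : Fin n → ℝ}
    (hα : IsOrderedSpectrum M α) :
    ∃ b : OrthonormalBasis (Fin n) ℝ (EuclideanSpace ℝ (Fin n)),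
      ∀ i, M.toEuclideanLin (b i) = α i • b i := by
  have hM : M.IsHermitian := isHermitian_iff_isSymm.2 hM
  set σ := Tuple.sort hM.eigenvalues
  have hασ : α = hM.eigenvalues ∘ σ := by
    refine hα.1.eq_of_prod_X_sub_C_eq (Tuple.monotone_sort _) ?_
    rw [← hα.2, hM.charpoly_eq, ← Equiv.prod_comp σ]
    simp
  refine ⟨hM.eigenvectorBasis.reindex σ.symm, fun i => ?_⟩
  rw [OrthonormalBasis.reindex_apply, Equiv.symm_symm, hασ]
  ext1 j
  simpa using congrFun (hM.mulVec_eigenvectorBasis (σ i)) j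

theorem Matrix.inner_toEuclideanLin_self {n : ℕ} (M : Matrix (Fin n) (Fin n) ℝ)
    (y : EuclideanSpace ℝ (Fin n)) : ⟪M.toEuclideanLin y, y⟫ = y.ofLp ⬝ᵥ M *ᵥ y.ofLp := by
  simp [EuclideanSpace.inner_eq_star_dotProduct]

theorem Finset.sum_sum_sub_sq {ι : Type*} [Fintype ι] (y : ι → ℝ) :
    ∑ i, ∑ j, (y i - y j) ^ 2 = 2 * (Fintype.card ι * ∑ i, y i ^ 2 - (∑ i, y i) ^ 2) := by
  simp only [sub_sq, sum_add_distrib, sum_sub_distrib, ← mul_sum, ← sum_mul, sum_const,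
    card_univ, nsmul_eq_mul]
  ring

theorem netLap_add {n : ℕ} (A B : Matrix (Fin n) (Fin n) ℝ) :
    netLap (A + B) = netLap A + netLap B := by
  simp only [netLap, Matrix.add_apply, sum_add_distrib, ← diagonal_add]
  abel

theorem two_mul_dotProduct_netLap_mulVec {n : ℕ} {A : Matrix (Fin n) (Fin n) ℝ} (hA : A.IsSymm)
    (y : Fin n → ℝ) :
    2 * (y ⬝ᵥ netLap A *ᵥ y) = ∑ i, ∑ j, A i j * (y i - y j) ^ 2 := by
  have hswap : ∑ i, ∑ j, A i j * y j ^ 2 = ∑ i, ∑ j, A i j * y i ^ 2 := by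
    rw [sum_comm]
    simp only [hA.apply]
  have hexp : ∑ i, ∑ j, A i j * (y i - y j) ^ 2
      = ∑ i, ∑ j, A i j * y i ^ 2 + ∑ i, ∑ j, A i j * y j ^ 2
        - 2 * ∑ i, ∑ j, A i j * (y i * y j) := by
    simp only [mul_sum, ← sum_add_distrib, ← sum_sub_distrib]
    refine sum_congr rfl fun i _ => sum_congr rfl fun j _ => by ring
  rw [hexp, hswap, netLap, sub_mulVec, dotProduct_sub, funext (mulVec_diagonal _ y)]
  simp only [dotProduct, mulVec, mul_sum, sum_mul, mul_sub, ← sum_add_distrib,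
    ← sum_sub_distrib]
  exact sum_congr rfl fun i _ => sum_congr rfl fun j _ => by ring

theorem dotProduct_netLap_mulVec_le {n : ℕ} {A : Matrix (Fin n) (Fin n) ℝ} (hA : A.IsSymm)
    (hA1 : ∀ i j, A i j ≤ 1) (y : Fin n → ℝ) : y ⬝ᵥ netLap A *ᵥ y ≤ n * (y ⬝ᵥ y) := by
  have hle : ∑ i, ∑ j, A i j * (y i - y j) ^ 2 ≤ ∑ i, ∑ j, (y i - y j) ^ 2 :=
    sum_le_sum fun i _ => sum_le_sum fun j _ => mul_le_of_le_one_left (sq_nonneg _) (hA1 i j)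
  have hdot : y ⬝ᵥ y = ∑ i, y i ^ 2 := by simp [dotProduct, sq]
  rw [← two_mul_dotProduct_netLap_mulVec hA, sum_sum_sub_sq, Fintype.card_fin] at hle
  rw [hdot]
  linarith [sq_nonneg (∑ i, y i)]

theorem dotProduct_netLap_single_add_single_mulVec {n : ℕ} (u v : Fin n)
    (y : Fin n → ℝ) : y ⬝ᵥ netLap (single u v 1 + single v u 1) *ᵥ y = (y u - y v) ^ 2 := by
  have hsymm : (single u v (1 : ℝ) + single v u 1).IsSymm := by
    simp [IsSymm, transpose_add, transpose_single, add_comm]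
  have := two_mul_dotProduct_netLap_mulVec hsymm y
  simp only [Matrix.add_apply, single_apply, ite_and, add_mul, ite_mul, one_mul, zero_mul,
    sum_add_distrib, sum_ite_irrel, sum_ite_eq, mem_univ, ↓reduceIte, sum_const_zero] at this
  linarith

theorem deleteEdge_eq_add_of_apply_eq_neg_one {n : ℕ} {A : Matrix (Fin n) (Fin n) ℝ}
    (hA : A.IsSymm) {u v : Fin n} (huv : u ≠ v) (he : A u v = -1) :
    deleteEdge A u v = A + (single u v 1 + single v u 1) := by
  have he' : A v u = -1 := (hA.apply u v).trans he
  ext i j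
  simp only [deleteEdge, of_apply, Matrix.add_apply, single_apply]
  split_ifs <;> grind

theorem dotProduct_netLap_deleteEdge_mulVec {n : ℕ} {A : Matrix (Fin n) (Fin n) ℝ}
    (hA : A.IsSymm) {u v : Fin n} (huv : u ≠ v) (he : A u v = -1) (y : Fin n → ℝ) :
    y ⬝ᵥ netLap (deleteEdge A u v) *ᵥ y = y ⬝ᵥ netLap A *ᵥ y + (y u - y v) ^ 2 := by
  rw [deleteEdge_eq_add_of_apply_eq_neg_one hA huv he, netLap_add, add_mulVec, dotProduct_add,
    dotProduct_netLap_single_add_single_mulVec]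

theorem Matrix.IsSymm.netLap {n : ℕ} {A : Matrix (Fin n) (Fin n) ℝ} (hA : A.IsSymm) :
    (netLap A).IsSymm :=
  (isSymm_diagonal _).sub hA

theorem IsSignedAdj.deleteEdge {n : ℕ} {A : Matrix (Fin n) (Fin n) ℝ} (hA : IsSignedAdj A)
    (u v : Fin n) : IsSignedAdj (deleteEdge A u v) := by
  obtain ⟨hsymm, hdiag, hent⟩ := hA
  refine ⟨?_, fun i => ?_, fun i j => ?_⟩
  · ext i j
    simp only [_root_.deleteEdge, transpose_apply, of_apply]
    split_ifs <;> grind [hsymm.apply i j]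
  all_goals simp only [_root_.deleteEdge, of_apply]; split_ifs <;> simp [*]

theorem IsSignedAdj.apply_le_one {n : ℕ} {A : Matrix (Fin n) (Fin n) ℝ} (hA : IsSignedAdj A)
    (i j : Fin n) : A i j ≤ 1 := by
  rcases hA.2.2 i j with h | h | h <;> rw [h] <;> norm_num

/-- deleting a negative edge, the ordered net-Laplacian spectra satisfy
alpha_p <= beta_p <= alpha_{p+1} for p = 1,...,m, with the convention alpha_{m+1} = m. -/
theorem stmt9 (m : ℕ) (A : Matrix (Fin m) (Fin m) ℝ) (hA : IsSignedAdj A)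
    (u v : Fin m) (huv : u ≠ v) (he : A u v = -1)
    (α β : Fin m → ℝ)
    (hα : IsOrderedSpectrum (netLap A) α)
    (hβ : IsOrderedSpectrum (netLap (deleteEdge A u v)) β) :
    ∀ p : Fin m, α p ≤ β p ∧ β p ≤ (Fin.snoc α (m : ℝ) : Fin (m+1) → ℝ) p.succ := by
  intro p
  have hA' := hA.deleteEdge u v
  obtain ⟨a, ha⟩ := hA.1.netLap.exists_orthonormalBasis_of_isOrderedSpectrum hα
  obtain ⟨b, hb⟩ := hA'.1.netLap.exists_orthonormalBasis_of_isOrderedSpectrum hβ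
  set x : EuclideanSpace ℝ (Fin m) := EuclideanSpace.single u 1 - EuclideanSpace.single v 1
  have hquad (y : EuclideanSpace ℝ (Fin m)) :
      ⟪(netLap (deleteEdge A u v)).toEuclideanLin y, y⟫
        = ⟪(netLap A).toEuclideanLin y, y⟫ + ⟪x, y⟫ ^ 2 := by
    rw [inner_toEuclideanLin_self, inner_toEuclideanLin_self,
      dotProduct_netLap_deleteEdge_mulVec hA.1 huv he]
    simp [x, inner_sub_left, EuclideanSpace.inner_single_left]
  refine ⟨eigenvalue_le_eigenvalue_of_forall_inner_le ha hα.1 hb hβ.1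
    (fun y => (hquad y).symm ▸ le_add_of_nonneg_right (sq_nonneg _)) p, ?_⟩
  rcases Fin.eq_castSucc_or_eq_last p.succ with ⟨q, hq⟩ | hq
  · have hpq : p < q := Fin.castSucc_lt_castSucc_iff.1 (hq ▸ p.castSucc_lt_succ)
    rw [hq, Fin.snoc_castSucc]
    exact eigenvalue_le_eigenvalue_of_forall_inner_le_of_inner_eq_zero ha hα.1 hb hβ.1 x
      (fun y hy => by rw [hquad, hy]; simp) hpq
  · rw [hq, Fin.snoc_last]
    refine b.eigenvalue_le_of_forall_inner_le_mul_norm_sq hb (fun y => ?_) p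
    rw [inner_toEuclideanLin_self, ← real_inner_self_eq_norm_sq,
      EuclideanSpace.inner_eq_star_dotProduct]
    exact dotProduct_netLap_mulVec_le hA'.1 hA'.apply_le_one y.ofLp
end

section
/- Let Γ be a signed graph of order m+1 and let v be a vertex of Γ with positive degree d_v⁺ = 0 (no positive edge is incident to v). Let Γ' = Γ − v be the signed graph of order m obtained by deleting v together with its incident edges. If (α_1, α_2, …, α_{m+1}) and (β_1, β_2, …, β_m) are the ordered net-Laplacian spectra of Γ and Γ' respectively, then α_p ≤ β_p ≤ α_{p+1} + 1 for every p = 1, 2, …, m. -/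
/-! Let `B` be the principal submatrix of `N(Γ)` on the vertices other than `v`. Deleting `v`
gives `N(Γ - v) = B + E`, where `E` is the diagonal matrix of the weights `-A i v`; these lie in
`[0, 1]` because every edge at `v` is negative. Cauchy interlacing bounds the spectrum `γ` of `B`
by `α p ≤ γ p ≤ α (p + 1)`, and `0 ≤ E ≤ I` as quadratic forms gives `γ p ≤ β p ≤ γ p + 1`.
Both comparisons are Courant–Fischer arguments: two subspaces whose dimensions add up to more
than the ambient dimension share a nonzero vector, on which the two Rayleigh-quotient bounds
meet. -/

open Polynomial

open Matrix Module Finset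

section QuadraticForm

variable {n k : ℕ}

theorem mulVec_dotProduct_mulVec_mulVec (U : Matrix (Fin n) (Fin k) ℝ)
    (M : Matrix (Fin n) (Fin n) ℝ) (x : Fin k → ℝ) :
    (U *ᵥ x) ⬝ᵥ (M *ᵥ (U *ᵥ x)) = x ⬝ᵥ ((Uᵀ * M * U) *ᵥ x) := by
  rw [← mulVec_mulVec, ← mulVec_mulVec, dotProduct_mulVec x, vecMul_transpose]

/-- `x ↦ U x` is an isometry carrying the quadratic form of `B` to that of `M`. -/
theorem exists_submodule_of_transpose_mul_self_eq_one {U : Matrix (Fin n) (Fin k) ℝ}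
    (hU : Uᵀ * U = 1) {M : Matrix (Fin n) (Fin n) ℝ} {B : Matrix (Fin k) (Fin k) ℝ}
    (hB : Uᵀ * M * U = B) (V : Submodule ℝ (Fin k → ℝ)) (R : ℝ → ℝ → Prop)
    (hV : ∀ x ∈ V, R (x ⬝ᵥ x) (x ⬝ᵥ (B *ᵥ x))) :
    ∃ W : Submodule ℝ (Fin n → ℝ), finrank ℝ W = finrank ℝ V ∧
      ∀ y ∈ W, R (y ⬝ᵥ y) (y ⬝ᵥ (M *ᵥ y)) := by
  have hinj : Function.Injective U.mulVecLin := fun x y hxy => by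
    simpa [mulVecLin_apply, mulVec_mulVec, hU] using congrArg (Uᵀ *ᵥ ·) hxy
  refine ⟨V.map U.mulVecLin, (Submodule.equivMapOfInjective _ hinj V).finrank_eq.symm, ?_⟩
  rintro _ ⟨x, hx, rfl⟩
  have hnorm := mulVec_dotProduct_mulVec_mulVec U 1 x
  simp only [Matrix.mul_one, hU, one_mulVec] at hnorm
  simpa only [mulVecLin_apply, hnorm, mulVec_dotProduct_mulVec_mulVec, hB] using hV x hx

theorem dotProduct_diagonal_mulVec_le_s13 {ι : Type*} [Fintype ι] [DecidableEq ι] {μ c : ι → ℝ}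
    {s : Set ι} {t : ℝ} (hc : c ∈ Pi.spanSubset ℝ s) (hμ : ∀ i ∈ s, μ i ≤ t) :
    c ⬝ᵥ (diagonal μ *ᵥ c) ≤ t * (c ⬝ᵥ c) := by
  simp only [dotProduct, mulVec_diagonal, Finset.mul_sum]
  refine Finset.sum_le_sum fun i _ => ?_
  by_cases hi : i ∈ s
  · nlinarith [hμ i hi, mul_self_nonneg (c i)]
  · simp [Pi.mem_spanSubset_iff.mp hc i hi]

theorem le_dotProduct_diagonal_mulVec {ι : Type*} [Fintype ι] [DecidableEq ι] {μ c : ι → ℝ}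
    {s : Set ι} {t : ℝ} (hc : c ∈ Pi.spanSubset ℝ s) (hμ : ∀ i ∈ s, t ≤ μ i) :
    t * (c ⬝ᵥ c) ≤ c ⬝ᵥ (diagonal μ *ᵥ c) := by
  simp only [dotProduct, mulVec_diagonal, Finset.mul_sum]
  refine Finset.sum_le_sum fun i _ => ?_
  by_cases hi : i ∈ s
  · nlinarith [hμ i hi, mul_self_nonneg (c i)]
  · simp [Pi.mem_spanSubset_iff.mp hc i hi]

theorem le_of_forall_mem_of_lt_finrank_add {V W : Submodule ℝ (Fin n → ℝ)}
    (hVW : n < finrank ℝ V + finrank ℝ W) (Q : (Fin n → ℝ) → ℝ) {s t : ℝ}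
    (hV : ∀ x ∈ V, s * (x ⬝ᵥ x) ≤ Q x) (hW : ∀ x ∈ W, Q x ≤ t * (x ⬝ᵥ x)) : s ≤ t := by
  obtain ⟨x, hxV, hxW, hx⟩ : ∃ x ∈ V, x ∈ W ∧ x ≠ 0 := by
    by_contra! h
    have := Submodule.finrank_add_finrank_le_of_disjoint (Submodule.disjoint_def.mpr h)
    simp only [finrank_fintype_fun_eq_card, Fintype.card_fin] at this
    omega
  have hpos : 0 < x ⬝ᵥ x := by simpa using dotProduct_star_self_pos_iff.mpr hx
  exact le_of_mul_le_mul_right ((hV x hxV).trans (hW x hxW)) hpos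

end QuadraticForm

section OrderedSpectrum

variable {n : ℕ} {M : Matrix (Fin n) (Fin n) ℝ} {μ ν : Fin n → ℝ}

theorem IsOrderedSpectrum.roots_charpoly (hμ : IsOrderedSpectrum M μ) :
    M.charpoly.roots = univ.val.map μ := by
  rw [hμ.2, Polynomial.roots_prod _ _ (by simp [Finset.prod_ne_zero_iff, X_sub_C_ne_zero])]
  simp

theorem Monotone.eq_of_map_univ_val_eq {α : Type*} [LinearOrder α] {f g : Fin n → α}
    (hf : Monotone f) (hg : Monotone g) (h : univ.val.map f = univ.val.map g) : f = g := by
  rw [Fin.univ_val_map, Fin.univ_val_map, Multiset.coe_eq_coe] at h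
  exact List.ofFn_injective
    (h.eq_of_sortedLE (List.sortedLE_ofFn_iff.mpr hf) (List.sortedLE_ofFn_iff.mpr hg))

theorem IsOrderedSpectrum.unique (hμ : IsOrderedSpectrum M μ) (hν : IsOrderedSpectrum M ν) :
    μ = ν :=
  hμ.1.eq_of_map_univ_val_eq hν.1 (hμ.roots_charpoly.symm.trans hν.roots_charpoly)

theorem Matrix.IsHermitian.isOrderedSpectrum_eigenvalues_comp_sort (hM : M.IsHermitian) :
    IsOrderedSpectrum M (hM.eigenvalues ∘ Tuple.sort hM.eigenvalues) := by
  refine ⟨Tuple.monotone_sort _, ?_⟩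
  rw [hM.charpoly_eq]
  exact (Equiv.prod_comp (Tuple.sort hM.eigenvalues) fun i => X - C (hM.eigenvalues i)).symm

theorem IsOrderedSpectrum.exists_diagonalization (hM : M.IsSymm) (hμ : IsOrderedSpectrum M μ) :
    ∃ U : Matrix (Fin n) (Fin n) ℝ, Uᵀ * U = 1 ∧ Uᵀ * M * U = diagonal μ := by
  have hH : M.IsHermitian := isHermitian_iff_isSymm.mpr hM
  set σ := Tuple.sort hH.eigenvalues
  set U₀ : Matrix (Fin n) (Fin n) ℝ := (hH.eigenvectorUnitary : Matrix (Fin n) (Fin n) ℝ)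
  have hU₀ : U₀ᵀ * U₀ = 1 := Unitary.coe_star_mul_self hH.eigenvectorUnitary
  have hMU₀ : U₀ᵀ * M * U₀ = diagonal hH.eigenvalues := by
    simpa [star_eq_conjTranspose] using hH.conjStarAlgAut_star_eigenvectorUnitary
  refine ⟨U₀.submatrix id σ, ?_, ?_⟩
  · rw [transpose_submatrix, ← submatrix_mul _ _ _ _ _ Function.bijective_id, hU₀,
      submatrix_one_equiv]
  · rw [hμ.unique hH.isOrderedSpectrum_eigenvalues_comp_sort, transpose_submatrix]
    conv_lhs => rw [← submatrix_id_id M]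
    rw [← submatrix_mul _ _ _ _ _ Function.bijective_id,
      ← submatrix_mul _ _ _ _ _ Function.bijective_id, hMU₀, submatrix_diagonal_equiv]

end OrderedSpectrum

section MinMax

variable {n : ℕ} {M : Matrix (Fin n) (Fin n) ℝ} {μ : Fin n → ℝ}

theorem IsOrderedSpectrum.exists_submodule_rayleigh_le (hM : M.IsSymm)
    (hμ : IsOrderedSpectrum M μ) (p : Fin n) :
    ∃ V : Submodule ℝ (Fin n → ℝ), finrank ℝ V = p + 1 ∧
      ∀ x ∈ V, x ⬝ᵥ (M *ᵥ x) ≤ μ p * (x ⬝ᵥ x) := by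
  obtain ⟨U, hU, hUM⟩ := hμ.exists_diagonalization hM
  obtain ⟨V, hV, hVM⟩ := exists_submodule_of_transpose_mul_self_eq_one hU hUM
    (Pi.spanSubset ℝ (Set.Iic p)) (fun a b => b ≤ μ p * a)
    fun x hx => dotProduct_diagonal_mulVec_le_s13 hx fun i hi => hμ.1 hi
  refine ⟨V, ?_, hVM⟩
  rw [hV, Pi.dim_spanSubset, ← Finset.coe_Iic, Set.ncard_coe_finset, Fin.card_Iic]

theorem IsOrderedSpectrum.exists_submodule_le_rayleigh (hM : M.IsSymm)
    (hμ : IsOrderedSpectrum M μ) (p : Fin n) :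
    ∃ V : Submodule ℝ (Fin n → ℝ), finrank ℝ V = n - p ∧
      ∀ x ∈ V, μ p * (x ⬝ᵥ x) ≤ x ⬝ᵥ (M *ᵥ x) := by
  obtain ⟨U, hU, hUM⟩ := hμ.exists_diagonalization hM
  obtain ⟨V, hV, hVM⟩ := exists_submodule_of_transpose_mul_self_eq_one hU hUM
    (Pi.spanSubset ℝ (Set.Ici p)) (fun a b => μ p * a ≤ b)
    fun x hx => le_dotProduct_diagonal_mulVec hx fun i hi => hμ.1 hi
  refine ⟨V, ?_, hVM⟩
  rw [hV, Pi.dim_spanSubset, ← Finset.coe_Ici, Set.ncard_coe_finset, Fin.card_Ici]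

theorem IsOrderedSpectrum.le_add_of_forall_dotProduct_mulVec_le {M' : Matrix (Fin n) (Fin n) ℝ}
    {μ' : Fin n → ℝ} (hM : M.IsSymm) (hM' : M'.IsSymm) (hμ : IsOrderedSpectrum M μ)
    (hμ' : IsOrderedSpectrum M' μ') {c : ℝ}
    (h : ∀ x, x ⬝ᵥ (M *ᵥ x) ≤ x ⬝ᵥ (M' *ᵥ x) + c * (x ⬝ᵥ x)) (p : Fin n) :
    μ p ≤ μ' p + c := by
  obtain ⟨V, hV, hVM⟩ := hμ.exists_submodule_le_rayleigh hM p
  obtain ⟨W, hW, hWM'⟩ := hμ'.exists_submodule_rayleigh_le hM' p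
  refine le_of_forall_mem_of_lt_finrank_add (V := V) (W := W) (by omega)
    (fun x => x ⬝ᵥ (M *ᵥ x)) hVM fun x hx => ?_
  linarith [h x, hWM' x hx]

theorem IsOrderedSpectrum.interlace {m : ℕ} {M : Matrix (Fin (m + 1)) (Fin (m + 1)) ℝ}
    {P : Matrix (Fin m) (Fin (m + 1)) ℝ} {α : Fin (m + 1) → ℝ} {γ : Fin m → ℝ} (hM : M.IsSymm)
    (hP : P * Pᵀ = 1) (hα : IsOrderedSpectrum M α) (hγ : IsOrderedSpectrum (P * M * Pᵀ) γ)
    (p : Fin m) : α p.castSucc ≤ γ p ∧ γ p ≤ α p.succ := by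
  have hPt : Pᵀᵀ * Pᵀ = 1 := by rwa [transpose_transpose]
  have hPMP : Pᵀᵀ * M * Pᵀ = P * M * Pᵀ := by rw [transpose_transpose]
  have hB : (P * M * Pᵀ).IsSymm := by
    rw [IsSymm, transpose_mul, transpose_mul, transpose_transpose, hM.eq, Matrix.mul_assoc]
  constructor
  · obtain ⟨V, hV, hVM⟩ := hα.exists_submodule_le_rayleigh hM p.castSucc
    obtain ⟨W₀, hW₀, hW₀B⟩ := hγ.exists_submodule_rayleigh_le hB p
    obtain ⟨W, hW, hWM⟩ := exists_submodule_of_transpose_mul_self_eq_one hPt hPMP W₀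
      (fun a b => b ≤ γ p * a) hW₀B
    exact le_of_forall_mem_of_lt_finrank_add (V := V) (W := W)
      (by simp only [Fin.val_castSucc] at hV; omega) (fun x => x ⬝ᵥ (M *ᵥ x)) hVM hWM
  · obtain ⟨V₀, hV₀, hV₀B⟩ := hγ.exists_submodule_le_rayleigh hB p
    obtain ⟨V, hV, hVM⟩ := exists_submodule_of_transpose_mul_self_eq_one hPt hPMP V₀
      (fun a b => γ p * a ≤ b) hV₀B
    obtain ⟨W, hW, hWM⟩ := hα.exists_submodule_rayleigh_le hM p.succ
    exact le_of_forall_mem_of_lt_finrank_add (V := V) (W := W)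
      (by simp only [Fin.val_succ] at hW; omega) (fun x => x ⬝ᵥ (M *ᵥ x)) hVM hWM

end MinMax

section Compression

variable {ι κ R : Type*} [Fintype ι] [DecidableEq ι] [CommSemiring R]

theorem Matrix.submatrix_eq_mul_mul_transpose (M : Matrix ι ι R) (f : κ → ι) :
    M.submatrix f f =
      (1 : Matrix ι ι R).submatrix f id * M * ((1 : Matrix ι ι R).submatrix f id)ᵀ := by
  ext i j
  simp [mul_apply, one_apply]

theorem Matrix.submatrix_one_mul_transpose [DecidableEq κ] {f : κ → ι}
    (hf : Function.Injective f) :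
    (1 : Matrix ι ι R).submatrix f id * ((1 : Matrix ι ι R).submatrix f id)ᵀ = 1 := by
  rw [transpose_submatrix, transpose_one, ← submatrix_mul _ _ _ _ _ Function.bijective_id,
    Matrix.mul_one, submatrix_one f hf]

end Compression

section SignedGraph

theorem netLap_isSymm {n : ℕ} {A : Matrix (Fin n) (Fin n) ℝ} (h : A.IsSymm) :
    (netLap A).IsSymm := by
  rw [IsSymm, netLap, transpose_sub, diagonal_transpose, h]

variable {m : ℕ} {A : Matrix (Fin (m + 1)) (Fin (m + 1)) ℝ} {v : Fin (m + 1)}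

theorem netLap_deleteVertex :
    netLap (deleteVertex A v) = (netLap A).submatrix v.succAbove v.succAbove
      + diagonal (fun i => -A (v.succAbove i) v) := by
  ext i j
  rcases eq_or_ne i j with rfl | hij
  · simp only [netLap, deleteVertex, Matrix.sub_apply, Matrix.add_apply, submatrix_apply,
      diagonal_apply_eq]
    rw [Fin.sum_univ_succAbove (fun l => A (v.succAbove i) l) v]
    ring
  · simp [netLap, deleteVertex, diagonal_apply_ne _ hij,
      diagonal_apply_ne _ (Fin.succAbove_right_injective.ne hij)]

theorem IsSignedAdj.neg_apply_mem_Icc_of_posDeg_eq_zero (hA : IsSignedAdj A)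
    (hv : posDeg A v = 0) (i : Fin (m + 1)) : -A i v ∈ Set.Icc 0 1 := by
  have hne : A v i ≠ 1 :=
    Set.eq_empty_iff_forall_notMem.mp ((Set.ncard_eq_zero (Set.toFinite _)).mp hv) i
  rw [hA.1.apply v i]
  rcases hA.2.2 v i with h | h | h <;> simp_all

theorem dotProduct_netLap_deleteVertex_mulVec (hA : IsSignedAdj A) (hv : posDeg A v = 0)
    (x : Fin m → ℝ) :
    x ⬝ᵥ ((netLap A).submatrix v.succAbove v.succAbove *ᵥ x) ≤
        x ⬝ᵥ (netLap (deleteVertex A v) *ᵥ x) ∧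
      x ⬝ᵥ (netLap (deleteVertex A v) *ᵥ x) ≤
        x ⬝ᵥ ((netLap A).submatrix v.succAbove v.succAbove *ᵥ x) + 1 * (x ⬝ᵥ x) := by
  have hx : x ∈ Pi.spanSubset ℝ Set.univ := Pi.mem_spanSubset_iff.mpr fun i hi => (hi trivial).elim
  have he := hA.neg_apply_mem_Icc_of_posDeg_eq_zero hv
  rw [netLap_deleteVertex, add_mulVec, dotProduct_add]
  constructor
  · linarith [le_dotProduct_diagonal_mulVec hx fun i _ => (he (v.succAbove i)).1]
  · linarith [dotProduct_diagonal_mulVec_le_s13 hx fun i _ => (he (v.succAbove i)).2]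

end SignedGraph

/-- deleting a vertex with zero positive degree, the ordered net-Laplacian
spectra satisfy alpha_p <= beta_p <= alpha_{p+1} + 1 for p = 1,...,m. -/
theorem stmt13 (m : ℕ) (A : Matrix (Fin (m+1)) (Fin (m+1)) ℝ) (hA : IsSignedAdj A)
    (v : Fin (m+1)) (hv : posDeg A v = 0)
    (α : Fin (m+1) → ℝ) (β : Fin m → ℝ)
    (hα : IsOrderedSpectrum (netLap A) α)
    (hβ : IsOrderedSpectrum (netLap (deleteVertex A v)) β) :
    ∀ p : Fin m, α p.castSucc ≤ β p ∧ β p ≤ α p.succ + 1 := by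
  set B := (netLap A).submatrix v.succAbove v.succAbove
  have hN : (netLap A).IsSymm := netLap_isSymm hA.1
  have hB : B.IsSymm := hN.submatrix _
  have hN' : (netLap (deleteVertex A v)).IsSymm := netLap_isSymm (hA.1.submatrix _)
  obtain ⟨γ, hγ⟩ : ∃ γ, IsOrderedSpectrum B γ :=
    ⟨_, (isHermitian_iff_isSymm.mpr hB).isOrderedSpectrum_eigenvalues_comp_sort⟩
  have hinterlace := hα.interlace hN (submatrix_one_mul_transpose Fin.succAbove_right_injective)
    (by rwa [← submatrix_eq_mul_mul_transpose])
  have hquad := dotProduct_netLap_deleteVertex_mulVec hA hv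
  intro p
  have hγβ := hγ.le_add_of_forall_dotProduct_mulVec_le hB hN' hβ (c := 0)
    (fun x => by linarith [(hquad x).1]) p
  have hβγ := hβ.le_add_of_forall_dotProduct_mulVec_le hN' hB hγ (fun x => (hquad x).2) p
  obtain ⟨hαγ, hγα⟩ := hinterlace p
  exact ⟨by linarith, by linarith⟩
end

section
/- Let Γ be a signed graph of order m without isolated vertices (every vertex has degree at least 1). Then every eigenvalue μ of the normalized net-Laplacian N̄(Γ) = D^{−1/2} N(Γ) D^{−1/2} satisfies −2 ≤ μ ≤ 2. -/
open Polynomial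

/-!
The normalized net-Laplacian `D^{-1/2} N D^{-1/2}` has the same characteristic polynomial as
`D^{-1} N`, since `charpoly (X * Y) = charpoly (Y * X)`. Row `i` of `N` has absolute row sum
`|sdeg i| + deg i ≤ 2 deg i`, so every row of `D^{-1} N` has absolute row sum at most `2`, and
Gershgorin's theorem bounds every eigenvalue by `2` in absolute value.
-/

open Matrix

theorem Matrix.charpoly_diagonal_mul_mul_diagonal {n R : Type*} [Fintype n] [DecidableEq n]
    [CommRing R] (d : n → R) (M : Matrix n n R) :
    (diagonal d * M * diagonal d).charpoly = (diagonal (d * d) * M).charpoly := by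
  rw [charpoly_mul_comm, ← mul_assoc, diagonal_mul_diagonal]
  rfl

theorem norm_le_of_hasEigenvalue_of_forall_sum_norm_le {n K : Type*} [Fintype n] [DecidableEq n]
    [NormedField K] {M : Matrix n n K} {μ : K} {r : ℝ}
    (hμ : Module.End.HasEigenvalue (toLin' M) μ) (hM : ∀ i, ∑ j, ‖M i j‖ ≤ r) : ‖μ‖ ≤ r := by
  obtain ⟨k, hk⟩ := eigenvalue_mem_ball hμ
  calc ‖μ‖ ≤ ‖M k k‖ + ∑ j ∈ Finset.univ.erase k, ‖M k j‖ := by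
        grw [norm_le_norm_add_norm_sub' μ (M k k), mem_closedBall_iff_norm.1 hk]
    _ = ∑ j, ‖M k j‖ := Finset.add_sum_erase _ (fun j => ‖M k j‖) (Finset.mem_univ k)
    _ ≤ r := hM k

section SignedAdj

variable {n : ℕ} {A : Matrix (Fin n) (Fin n) ℝ}

theorem deg_eq_sum_abs (hA : ∀ i j, A i j = -1 ∨ A i j = 0 ∨ A i j = 1) (i : Fin n) :
    (deg A i : ℝ) = ∑ j, |A i j| := by
  rw [deg, Set.ncard_eq_toFinset_card', Set.toFinset_ofPred, Finset.card_filter]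
  push_cast
  refine Finset.sum_congr rfl fun j _ => ?_
  rcases hA i j with h | h | h <;> simp [h]

theorem sum_abs_netLap_le (hA : ∀ i j, A i j = -1 ∨ A i j = 0 ∨ A i j = 1) (i : Fin n) :
    ∑ j, |netLap A i j| ≤ 2 * deg A i := by
  have hsdeg : |∑ j, A i j| ≤ deg A i :=
    (Finset.abs_sum_le_sum_abs _ _).trans_eq (deg_eq_sum_abs hA i).symm
  calc ∑ j, |netLap A i j|
      ≤ ∑ j, (|diagonal (fun k => ∑ j, A k j) i j| + |A i j|) :=
        Finset.sum_le_sum fun j _ => abs_sub _ _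
    _ = |∑ j, A i j| + deg A i := by
        rw [Finset.sum_add_distrib, deg_eq_sum_abs hA i]
        simp only [diagonal_apply, apply_ite, abs_zero, Finset.sum_ite_eq, Finset.mem_univ, if_true]
    _ ≤ 2 * deg A i := by linarith

theorem charpoly_normNetLap :
    (normNetLap A).charpoly = (diagonal (fun i => (deg A i : ℝ)⁻¹) * netLap A).charpoly := by
  rw [normNetLap, charpoly_diagonal_mul_mul_diagonal]
  congr 3
  ext i
  simp [← mul_inv, Real.mul_self_sqrt (Nat.cast_nonneg _)]

theorem sum_abs_diagonal_inv_deg_mul_netLap_le (hA : ∀ i j, A i j = -1 ∨ A i j = 0 ∨ A i j = 1)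
    (i : Fin n) : ∑ j, |(diagonal (fun i => (deg A i : ℝ)⁻¹) * netLap A) i j| ≤ 2 := by
  simp only [diagonal_mul, abs_mul, ← Finset.mul_sum, abs_inv, Nat.abs_cast]
  rcases (Nat.cast_nonneg (α := ℝ) (deg A i)).eq_or_lt with h | h
  · -- an isolated vertex gives a zero row, as `(0 : ℝ)⁻¹ = 0`
    simp [← h]
  · rw [inv_mul_le_iff₀ h, mul_comm]
    exact sum_abs_netLap_le hA i

end SignedAdj

theorem stmt15_general (m : ℕ) (A : Matrix (Fin m) (Fin m) ℝ) (hA : IsSignedAdj A) :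
    ∀ μ : ℝ, (normNetLap A).charpoly.IsRoot μ → -2 ≤ μ ∧ μ ≤ 2 := by
  intro μ hμ
  have hev : Module.End.HasEigenvalue
      (toLin' (diagonal (fun i => (deg A i : ℝ)⁻¹) * netLap A)) μ := by
    rwa [Module.End.hasEigenvalue_iff_isRoot_charpoly, charpoly_toLin',
      ← charpoly_normNetLap]
  exact abs_le.1 <| norm_le_of_hasEigenvalue_of_forall_sum_norm_le hev
    (sum_abs_diagonal_inv_deg_mul_netLap_le hA.2.2)

/-- for a signed graph without isolated vertices, every eigenvalue of the
normalized net-Laplacian lies in [-2, 2]. -/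
theorem stmt15 (m : ℕ) (A : Matrix (Fin m) (Fin m) ℝ) (hA : IsSignedAdj A)
    (hiso : ∀ i, 1 ≤ deg A i) :
    ∀ μ : ℝ, (normNetLap A).charpoly.IsRoot μ → -2 ≤ μ ∧ μ ≤ 2 :=
  stmt15_general m A hA
end
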